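/- arXiv:2212.11947 — 3 statements merged into one kernel-verified Lean document; each statement's English description precedes it below -/
import Mathlib

section
/- Let F be a field, let α ∈ F be nonzero, let ℓ, m ≥ 1, let σ be a permutation of Fin m with permutation matrix M_σ (the 0–1 matrix with (M_σ)_{s,p} = 1 iff s = σ(p)), and let Z̄ be an arbitrary m × m matrix over F. Let Δ : Fin m → Fin ℓ → F be updates and z : Fin m → F be noise symbols, and define the permuted update vector Y : Fin m → F by Y_p = Σ_{i=1}^{ℓ} α^{−i} Δ_{σ(p), i} + z_p (the combined update of real subpacket σ(p) placed at permuted position p). Then there exist polynomials Q_s ∈ F[X], each of degree at most ℓ, such that for every s ∈ Fin m, the s-th entry of (M_σ + α^ℓ • Z̄) · Y equals Σ_{i=1}^{ℓ} α^{−i} Δ_{s, i} + Q_s(α). That is, the noise-added permutation reversing matrix privately rearranges the permuted updates into their correct (real) positions, with the noise contribution being a polynomial in α of degree at most ℓ that does not interfere with the negative powers of α carrying the data. -/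
open Matrix Polynomial

/-- Writing-phase correctness of Case 1: multiplying the permuted update vector
`Y p = ∑_{i=1}^{ℓ} α^{-i} Δ_{σ p, i} + z p` by the noise-added permutation reversing
matrix `M_σ + α^ℓ • Z̄` (where `(M_σ)_{s,p} = 1` iff `s = σ p`) places each combined
update at its correct real position: the `s`-th entry equals
`∑_{i=1}^{ℓ} α^{-i} Δ_{s,i}` plus the evaluation at `α` of a polynomial of degree at
most `ℓ`. -/
theorem writing_phase_correctness_case1
    (F : Type*) [Field F] (α : F) (hα : α ≠ 0) (ℓ m : ℕ) (hℓ : 1 ≤ ℓ) (hm : 1 ≤ m)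
    (σ : Equiv.Perm (Fin m)) (Zbar : Matrix (Fin m) (Fin m) F)
    (Δ : Fin m → Fin ℓ → F) (z : Fin m → F)
    (Y : Fin m → F)
    (hY : ∀ p, Y p = ∑ i : Fin ℓ, α ^ (-(((i : ℕ) : ℤ) + 1)) * Δ (σ p) i + z p) :
    ∃ Q : Fin m → Polynomial F, (∀ s, (Q s).degree ≤ (ℓ : ℕ)) ∧
      ∀ s : Fin m,
        (((Matrix.of fun s p : Fin m => if s = σ p then (1 : F) else 0)
            + α ^ ℓ • Zbar).mulVec Y) s
          = ∑ i : Fin ℓ, α ^ (-(((i : ℕ) : ℤ) + 1)) * Δ s i + (Q s).eval α := by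
  refine ⟨fun s => C (z (σ⁻¹ s)) + ∑ p : Fin m, C (Zbar s p) *
      (∑ i : Fin ℓ, C (Δ (σ p) i) * X ^ (ℓ - 1 - (i : ℕ)) + C (z p) * X ^ ℓ), ?_, ?_⟩
  · intro s
    refine le_trans (degree_add_le _ _) (max_le (le_trans degree_C_le ?_) ?_)
    · exact_mod_cast Nat.zero_le ℓ
    · refine le_trans (degree_sum_le _ _) (Finset.sup_le fun p _ => ?_)
      refine le_trans (degree_mul_le _ _) ?_
      have h0 : (Polynomial.C (Zbar s p)).degree ≤ 0 := degree_C_le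
      have hdeg : (∑ i : Fin ℓ, C (Δ (σ p) i) * X ^ (ℓ - 1 - (i : ℕ)) + C (z p) * X ^ ℓ).degree ≤ ((ℓ : ℕ) : WithBot ℕ) := by
        refine le_trans (degree_add_le _ _) (max_le ?_ ?_)
        · refine le_trans (degree_sum_le _ _) (Finset.sup_le fun i _ => ?_)
          refine le_trans (degree_C_mul_X_pow_le _ _) ?_
          exact Nat.cast_le.mpr (le_trans (Nat.sub_le _ _) (Nat.sub_le _ _))
        · refine le_trans (degree_C_mul_X_pow_le _ _) le_rfl
      calc (C (Zbar s p)).degree + _ ≤ 0 + ((ℓ:ℕ) : WithBot ℕ) := add_le_add h0 hdeg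
        _ = ((ℓ:ℕ) : WithBot ℕ) := zero_add _
  · intro s
    have hσ : σ (σ⁻¹ s) = s := Equiv.apply_symm_apply σ s
    have key : ∀ i : Fin ℓ, α ^ ℓ * α ^ (-(((i:ℕ):ℤ)+1)) = α ^ (ℓ - 1 - (i:ℕ)) := by
      intro i
      have hi : (i:ℕ) + 1 ≤ ℓ := i.2
      rw [← zpow_natCast α ℓ, ← zpow_add₀ hα, ← zpow_natCast α (ℓ-1-(i:ℕ))]
      congr 1
      push_cast
      omega
    simp only [Matrix.mulVec, dotProduct, Matrix.add_apply, Matrix.smul_apply,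
      smul_eq_mul, Matrix.of_apply]
    have h1 : ∑ p : Fin m, (if s = σ p then (1:F) else 0) * Y p = Y (σ⁻¹ s) := by
      have hcond : ∀ p : Fin m, (s = σ p) ↔ (σ⁻¹ s = p) := by
        intro p; constructor
        · intro h; simp [h]
        · intro h; rw [← h, hσ]
      simp only [hcond]
      simp [Finset.sum_ite_eq]
    simp only [add_mul, Finset.sum_add_distrib, mul_assoc]
    rw [h1, ← Finset.mul_sum, hY (σ⁻¹ s), hσ]
    have h2 : α ^ ℓ * ∑ p : Fin m, Zbar s p * Y p
        = eval α (∑ p : Fin m, C (Zbar s p) *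
          (∑ i : Fin ℓ, C (Δ (σ p) i) * X ^ (ℓ - 1 - (i : ℕ)) + C (z p) * X ^ ℓ)) := by
      rw [Finset.mul_sum, eval_finset_sum]
      refine Finset.sum_congr rfl fun p _ => ?_
      rw [hY p]
      simp only [eval_mul, eval_add, eval_C, eval_finset_sum, eval_pow, eval_X]
      rw [mul_left_comm]
      congr 1
      rw [mul_add, Finset.mul_sum]
      congr 1
      · exact Finset.sum_congr rfl fun i _ => by rw [← mul_assoc, key i, mul_comm]
      · ring
    simp only [eval_add, eval_C]
    rw [h2]
    ring
end

section
/- Let F be a field, let α ∈ F be nonzero, let ℓ, B, m ≥ 1, let τ be a permutation of Fin B and for each j ∈ Fin B let σ_j be a permutation of Fin m, and let Z̄_j (for j ∈ Fin B) be arbitrary m × m matrices over F and Z an arbitrary B × B matrix over F. Write M_ρ for the permutation matrix of a permutation ρ (the 0–1 matrix with (M_ρ)_{i,j} = 1 iff i = ρ(j)). Then there exists a (Fin B × Fin m) × (Fin B × Fin m) matrix E whose every entry is the evaluation at α of a polynomial over F of degree at most ℓ, such that blockDiagonal(j ↦ M_{σ_j} + α^ℓ • Z̄_j) · ((M_τ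 + α^ℓ • Z) ⊗ I_m) = M_π + α^ℓ • E, where π is the permutation of Fin B × Fin m defined by π(j, i) = (τ(j), σ_{τ(j)}(i)), ⊗ is the Kronecker product, and I_m is the m × m identity matrix. -/
open Matrix Kronecker

/-- Structure of the combined noisy permutation reversing matrix of Case 2: the product
of the block-diagonal matrix of the noisy within-segment permutation reversing matrices
`M_{σ_j} + α^ℓ • Z̄_j` (block index first) with the Kronecker product
`(M_τ + α^ℓ • Z) ⊗ I_m` equals `M_π + α^ℓ • E`, where `π (j, i) = (τ j, σ_{τ j} i)` and
every entry of `E` is the evaluation at `α` of a polynomial of degree at most `ℓ`.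
Here `M_ρ` is the 0–1 matrix with `(M_ρ)_{i,j} = 1` iff `i = ρ j`. -/
theorem combined_noisy_permutation_matrix
    (F : Type*) [Field F] (α : F) (hα : α ≠ 0) (ℓ B m : ℕ)
    (hℓ : 1 ≤ ℓ) (hB : 1 ≤ B) (hm : 1 ≤ m)
    (τ : Equiv.Perm (Fin B)) (σ : Fin B → Equiv.Perm (Fin m))
    (Zbar : Fin B → Matrix (Fin m) (Fin m) F) (Z : Matrix (Fin B) (Fin B) F) :
    ∃ E : Matrix (Fin B × Fin m) (Fin B × Fin m) F,
      (∀ x y, ∃ p : Polynomial F, p.degree ≤ (ℓ : ℕ) ∧ E x y = p.eval α) ∧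
      (Matrix.of fun x y : Fin B × Fin m =>
          if x.1 = y.1 then
            ((Matrix.of fun i i' : Fin m => if i = σ x.1 i' then (1 : F) else 0)
              + α ^ ℓ • Zbar x.1) x.2 y.2
          else 0)
        * (((Matrix.of fun j j' : Fin B => if j = τ j' then (1 : F) else 0) + α ^ ℓ • Z)
            ⊗ₖ (1 : Matrix (Fin m) (Fin m) F))
      = (Matrix.of fun x y : Fin B × Fin m =>
          if x = (τ y.1, σ (τ y.1) y.2) then (1 : F) else 0) + α ^ ℓ • E := by
  refine ⟨Matrix.of fun x y =>
    (Zbar x.1 x.2 y.2 * (if x.1 = τ y.1 then 1 else 0)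
      + (if x.2 = σ x.1 y.2 then 1 else 0) * Z x.1 y.1)
    + α ^ ℓ * (Zbar x.1 x.2 y.2 * Z x.1 y.1), ?_, ?_⟩
  · intro x y
    refine ⟨Polynomial.C (Zbar x.1 x.2 y.2 * (if x.1 = τ y.1 then 1 else 0)
        + (if x.2 = σ x.1 y.2 then 1 else 0) * Z x.1 y.1)
      + Polynomial.C (Zbar x.1 x.2 y.2 * Z x.1 y.1) * Polynomial.X ^ ℓ, ?_, ?_⟩
    · refine (Polynomial.degree_add_le _ _).trans (max_le ?_ ?_)
      · exact Polynomial.degree_C_le.trans (by exact_mod_cast Nat.zero_le ℓ)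
      · refine (Polynomial.degree_mul_le _ _).trans ?_
        calc (Polynomial.C (Zbar x.1 x.2 y.2 * Z x.1 y.1)).degree
              + (Polynomial.X ^ ℓ : Polynomial F).degree
            ≤ 0 + (ℓ : WithBot ℕ) :=
              add_le_add Polynomial.degree_C_le (Polynomial.degree_X_pow_le ℓ)
          _ = (ℓ : WithBot ℕ) := zero_add _
    · simp only [Matrix.of_apply, Polynomial.eval_add, Polynomial.eval_mul,
        Polynomial.eval_C, Polynomial.eval_pow, Polynomial.eval_X]
      ring
  · ext ⟨xb, xi⟩ ⟨yb, yi⟩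
    simp only [Matrix.mul_apply, Matrix.of_apply, Matrix.kroneckerMap_apply,
      Matrix.add_apply, Matrix.smul_apply, smul_eq_mul, Matrix.one_apply,
      Fintype.sum_prod_type]
    rw [Finset.sum_eq_single xb]
    · rw [Finset.sum_eq_single yi]
      · by_cases h : xb = τ yb
        · subst h
          by_cases h2 : xi = σ (τ yb) yi <;>
            simp [h2, Prod.ext_iff, mul_ite, ite_mul] <;> ring
        · simp only [h, Prod.ext_iff, if_neg h, false_and, if_false, mul_ite,
            ite_mul, mul_one, one_mul, mul_zero, zero_mul]
          split_ifs <;> ring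
      · intro i _ hi; simp [hi]
      · intro h; exact absurd (Finset.mem_univ yi) h
    · intro b _ hb
      simp [Ne.symm hb, Finset.sum_eq_zero]
    · intro h; exact absurd (Finset.mem_univ xb) h
end

section
/- Let F be a field, let α ∈ F be nonzero, let ℓ, m ≥ 1, and let W : Fin m → Fin ℓ → F and Z : Fin m → Fin (2ℓ+1) → F be arbitrary. Define the storage vector S : Fin m → F by S_k = Σ_{i=1}^{ℓ} α^{−i} W_{k,i} + Σ_{i=0}^{2ℓ} α^{i} Z_{k,i}. Let p ∈ Fin m, and let the query vector be Q = e_p + α^ℓ • v, where e_p is the p-th standard basis vector and each entry v_k of v is the evaluation at α of a polynomial over F of degree at most ℓ. Then there exists a polynomial R ∈ F[X] of degree at most 4ℓ such that the inner product Σ_{k} S_k Q_k equals Σ_{i=1}^{ℓ} α^{−i} W_{p,i} + R(α). -/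
/-- Reading-phase answer structure of Case 2: with storage
`S k = ∑_{i=1}^{ℓ} α^{-i} W_{k,i} + ∑_{i=0}^{2ℓ} α^{i} Z_{k,i}` and query
`Q = e_p + α^ℓ • v`, where each entry of `v` is the evaluation at `α` of a polynomial of
degree at most `ℓ`, the answer `∑ₖ S k * Q k` equals the coded data
`∑_{i=1}^{ℓ} α^{-i} W_{p,i}` of the desired subpacket plus the evaluation at `α` of a
polynomial of degree at most `4ℓ`. -/
theorem reading_phase_answer_case2
    (F : Type*) [Field F] (α : F) (hα : α ≠ 0) (ℓ m : ℕ) (hℓ : 1 ≤ ℓ) (hm : 1 ≤ m)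
    (W : Fin m → Fin ℓ → F) (Z : Fin m → Fin (2 * ℓ + 1) → F)
    (S : Fin m → F)
    (hS : ∀ k, S k = ∑ i : Fin ℓ, α ^ (-(((i : ℕ) : ℤ) + 1)) * W k i
        + ∑ i : Fin (2 * ℓ + 1), α ^ (i : ℕ) * Z k i)
    (p : Fin m) (v : Fin m → F)
    (hv : ∀ k, ∃ q : Polynomial F, q.degree ≤ (ℓ : ℕ) ∧ v k = q.eval α)
    (Q : Fin m → F)
    (hQ : ∀ k, Q k = (if k = p then (1 : F) else 0) + α ^ ℓ * v k) :
    ∃ R : Polynomial F, R.degree ≤ (4 * ℓ : ℕ) ∧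
      ∑ k : Fin m, S k * Q k
        = ∑ i : Fin ℓ, α ^ (-(((i : ℕ) : ℤ) + 1)) * W p i + R.eval α := by
  classical
  choose q hqdeg hqval using hv
  set Pk : Fin m → Polynomial F := fun k =>
    (∑ i : Fin ℓ, Polynomial.C (W k i) * Polynomial.X ^ (ℓ - 1 - (i : ℕ)))
      + ∑ i : Fin (2 * ℓ + 1), Polynomial.C (Z k i) * Polynomial.X ^ (ℓ + (i : ℕ))
    with hPk
  have hPdeg : ∀ k, (Pk k).degree ≤ (3 * ℓ : ℕ) := by
    intro k
    refine le_trans (Polynomial.degree_add_le _ _) (max_le ?_ ?_)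
    · refine le_trans (Polynomial.degree_sum_le _ _) (Finset.sup_le fun i _ => ?_)
      refine le_trans (Polynomial.degree_C_mul_X_pow_le _ _) ?_
      exact Nat.cast_le.mpr (by omega)
    · refine le_trans (Polynomial.degree_sum_le _ _) (Finset.sup_le fun i _ => ?_)
      refine le_trans (Polynomial.degree_C_mul_X_pow_le _ _) ?_
      exact_mod_cast Nat.cast_le.mpr (by omega : ℓ + (i : ℕ) ≤ 3 * ℓ)
  have hPeval : ∀ k, (Pk k).eval α = α ^ ℓ * S k := by
    intro k
    rw [hS k, mul_add, Finset.mul_sum, Finset.mul_sum, hPk]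
    simp only [Polynomial.eval_add, Polynomial.eval_finset_sum, Polynomial.eval_mul,
      Polynomial.eval_pow, Polynomial.eval_C, Polynomial.eval_X]
    congr 1
    · refine Finset.sum_congr rfl fun i _ => ?_
      rw [← mul_assoc, mul_comm (W k i)]
      congr 1
      have hi : (i : ℕ) < ℓ := i.isLt
      rw [← zpow_natCast α ℓ, ← zpow_add₀ hα, ← zpow_natCast α (ℓ - 1 - (i : ℕ))]
      congr 1
      omega
    · refine Finset.sum_congr rfl fun i _ => ?_
      rw [pow_add]
      ring
  refine ⟨(∑ k : Fin m, Pk k * q k)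
      + ∑ i : Fin (2 * ℓ + 1), Polynomial.C (Z p i) * Polynomial.X ^ (i : ℕ), ?_, ?_⟩
  · refine le_trans (Polynomial.degree_add_le _ _) (max_le ?_ ?_)
    · refine le_trans (Polynomial.degree_sum_le _ _) (Finset.sup_le fun k _ => ?_)
      refine le_trans (Polynomial.degree_mul_le _ _) ?_
      calc (Pk k).degree + (q k).degree ≤ ((3 * ℓ : ℕ) : WithBot ℕ) + ((ℓ : ℕ) : WithBot ℕ) :=
            add_le_add (hPdeg k) (hqdeg k)
        _ = ((4 * ℓ : ℕ) : WithBot ℕ) := by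
            rw [← Nat.cast_add]; congr 1; omega
    · refine le_trans (Polynomial.degree_sum_le _ _) (Finset.sup_le fun i _ => ?_)
      refine le_trans (Polynomial.degree_C_mul_X_pow_le _ _) ?_
      exact_mod_cast Nat.cast_le.mpr (by omega : (i : ℕ) ≤ 4 * ℓ)
  · have hsplit : ∑ k : Fin m, S k * Q k
        = S p + ∑ k : Fin m, (Pk k).eval α * (q k).eval α := by
      have : ∀ k : Fin m, S k * Q k
          = S k * (if k = p then (1 : F) else 0) + (Pk k).eval α * (q k).eval α := by
        intro k
        rw [hQ k, hPeval k, ← hqval k]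
        ring
      rw [Finset.sum_congr rfl fun k _ => this k, Finset.sum_add_distrib]
      congr 1
      simp [Finset.sum_ite_eq]
    rw [hsplit, hS p]
    simp only [Polynomial.eval_add, Polynomial.eval_finset_sum, Polynomial.eval_mul,
      Polynomial.eval_pow, Polynomial.eval_C, Polynomial.eval_X]
    rw [Finset.sum_congr rfl fun (i : Fin (2*ℓ+1)) _ => mul_comm (Z p i) (α ^ (i : ℕ))]
    ring
end
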